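/- arXiv:1103.4629 — 6 statements merged into one kernel-verified Lean document; each statement's English description precedes it below -/
import Mathlib

section
/- For a signed graph Σ on n vertices, jᵀL(Σ)³j = 4·∑_{j=1}^n d_j(d_j^-)² − 8·∑_{e_{ij}∈E} σ(e_{ij})·d_i^-·d_j^-, where the second sum is over edges of Σ. -/
open Matrix BigOperators

noncomputable section

/-- Signed adjacency matrix. -/
def adjMat (n : ℕ) (G : SimpleGraph (Fin n)) [DecidableRel G.Adj]
    (s : Fin n → Fin n → ℝ) : Matrix (Fin n) (Fin n) ℝ :=
  fun i j => if G.Adj i j then s i j else 0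

/-- Laplacian matrix of a signed graph: L = D - A. -/
def lapMat (n : ℕ) (G : SimpleGraph (Fin n)) [DecidableRel G.Adj]
    (s : Fin n → Fin n → ℝ) : Matrix (Fin n) (Fin n) ℝ :=
  Matrix.diagonal (fun i => (G.degree i : ℝ)) - adjMat n G s

/-- Number of negative edges incident to vertex `j`. -/
def dNeg (n : ℕ) (G : SimpleGraph (Fin n)) (s : Fin n → Fin n → ℝ) (j : Fin n) : ℕ :=
  Nat.card {i : Fin n // G.Adj j i ∧ s j i = -1}

/-- Number of positive edges incident to vertex `j`. -/
def dPos (n : ℕ) (G : SimpleGraph (Fin n)) (s : Fin n → Fin n → ℝ) (j : Fin n) : ℕ :=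
  Nat.card {i : Fin n // G.Adj j i ∧ s j i = 1}

/-- Sum of `f i j` over the edges `{v_i, v_j}` of the graph (each unordered edge counted once). -/
def edgeSum (n : ℕ) (G : SimpleGraph (Fin n)) [DecidableRel G.Adj]
    (f : Fin n → Fin n → ℝ) : ℝ :=
  (∑ i, ∑ j, if G.Adj i j then f i j else 0) / 2

/-- `t^±(Σ)`: number of positive triangles minus number of negative triangles. -/
def tPM (n : ℕ) (G : SimpleGraph (Fin n)) [DecidableRel G.Adj]
    (s : Fin n → Fin n → ℝ) : ℝ :=
  (∑ i, ∑ j, ∑ k, if G.Adj i j ∧ G.Adj j k ∧ G.Adj k i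
    then s i j * s j k * s k i else 0) / 6

/-- Number of balanced connected components: components that can be switched all-positive. -/
def numBalanced (n : ℕ) (G : SimpleGraph (Fin n)) (s : Fin n → Fin n → ℝ) : ℕ :=
  Nat.card {c : G.ConnectedComponent //
    ∃ θ : Fin n → ℝ, (∀ v, θ v = 1 ∨ θ v = -1) ∧
      ∀ i j, G.Adj i j → G.connectedComponentMk i = c → s i j = θ i * θ j}
open scoped Classical in
lemma dNeg_card (n : ℕ) (G : SimpleGraph (Fin n)) (s : Fin n → Fin n → ℝ) (i : Fin n) :
    dNeg n G s i = (Finset.univ.filter (fun j => G.Adj i j ∧ s i j = -1)).card := by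
  rw [dNeg, Nat.card_eq_fintype_card, Fintype.card_subtype]

lemma rowSum (n : ℕ) (G : SimpleGraph (Fin n)) [DecidableRel G.Adj]
    (s : Fin n → Fin n → ℝ)
    (hsgn : ∀ i j, G.Adj i j → s i j = 1 ∨ s i j = -1) (i : Fin n) :
    ∑ j, (if G.Adj i j then s i j else 0) = (G.degree i : ℝ) - 2 * (dNeg n G s i : ℝ) := by
  classical
  rw [← Finset.sum_filter]
  have h1 : ∀ j ∈ Finset.univ.filter (fun j => G.Adj i j),
      s i j = 1 - 2 * (if s i j = -1 then (1:ℝ) else 0) := by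
    intro j hj
    rcases hsgn i j (by simpa using hj) with h | h <;> rw [h] <;> norm_num
  rw [Finset.sum_congr rfl h1, Finset.sum_sub_distrib, Finset.sum_const, ← Finset.mul_sum,
    Finset.sum_boole, Finset.filter_filter, dNeg_card n G s i]
  have hd : G.degree i = (Finset.univ.filter (fun j => G.Adj i j)).card := by
    rw [← SimpleGraph.neighborFinset_eq_filter, SimpleGraph.card_neighborFinset_eq_degree]
  rw [hd]
  congr 3
  · simp
  · congr

lemma lapSym (n : ℕ) (G : SimpleGraph (Fin n)) [DecidableRel G.Adj]
    (s : Fin n → Fin n → ℝ) (hsym : ∀ i j, s i j = s j i) :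
    (lapMat n G s)ᵀ = lapMat n G s := by
  ext i j
  simp only [Matrix.transpose_apply, lapMat, adjMat, Matrix.sub_apply, Matrix.diagonal_apply]
  by_cases h : G.Adj i j
  · have h' : G.Adj j i := h.symm
    have hne : i ≠ j := G.ne_of_adj h
    simp [h, h', hne, hne.symm, hsym i j]
  · have h' : ¬ G.Adj j i := fun hc => h hc.symm
    by_cases he : i = j
    · subst he; simp
    · simp [h, h', he, Ne.symm he]

lemma lapMulVecOne (n : ℕ) (G : SimpleGraph (Fin n)) [DecidableRel G.Adj]
    (s : Fin n → Fin n → ℝ)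
    (hsgn : ∀ i j, G.Adj i j → s i j = 1 ∨ s i j = -1) :
    (lapMat n G s).mulVec (fun _ => (1:ℝ)) = fun i => 2 * (dNeg n G s i : ℝ) := by
  funext i
  simp only [Matrix.mulVec, dotProduct, lapMat, Matrix.sub_apply, adjMat, mul_one,
    Finset.sum_sub_distrib]
  rw [rowSum n G s hsgn i]
  simp [Matrix.diagonal_apply, Finset.sum_ite_eq]

lemma mainCalc (n : ℕ) (G : SimpleGraph (Fin n)) [DecidableRel G.Adj]
    (s : Fin n → Fin n → ℝ) (hsym : ∀ i j, s i j = s j i)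
    (hsgn : ∀ i j, G.Adj i j → s i j = 1 ∨ s i j = -1) :
    dotProduct (fun _ => (1 : ℝ)) (((lapMat n G s) ^ 3).mulVec fun _ => 1) =
      4 * ∑ j, (G.degree j : ℝ) * (dNeg n G s j : ℝ) ^ 2 -
        8 * ((∑ i, ∑ j, if G.Adj i j then s i j * (dNeg n G s i : ℝ) * (dNeg n G s j : ℝ) else 0) / 2) := by
  classical
  set L := lapMat n G s with hL
  set w : Fin n → ℝ := fun i => 2 * (dNeg n G s i : ℝ) with hw
  have hmv : L.mulVec (fun _ => (1:ℝ)) = w := lapMulVecOne n G s hsgn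
  have hT : Lᵀ = L := lapSym n G s hsym
  have h3 : (L ^ 3).mulVec (fun _ => (1:ℝ)) = L.mulVec (L.mulVec w) := by
    rw [pow_succ, pow_two, ← Matrix.mulVec_mulVec, ← Matrix.mulVec_mulVec, hmv]
  rw [h3, dotProduct_mulVec, ← hT, Matrix.vecMul_transpose, hT, hmv]
  -- now: dot w (L.mulVec w) = RHS
  have hLij : ∀ i j, L i j = (if i = j then (G.degree i : ℝ) else 0) -
      (if G.Adj i j then s i j else 0) := by
    intro i j
    simp [hL, lapMat, adjMat, Matrix.diagonal_apply]
  have key : ∀ i, ∑ j, L i j * w j =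
      (G.degree i : ℝ) * w i - ∑ j, (if G.Adj i j then s i j * w j else 0) := by
    intro i
    simp only [hLij, sub_mul, ite_mul, zero_mul, Finset.sum_sub_distrib]
    congr 1
    simp [Finset.sum_ite_eq]
  simp only [dotProduct, Matrix.mulVec, key, mul_sub]
  rw [Finset.sum_sub_distrib]
  have e1 : ∑ i, w i * ((G.degree i : ℝ) * w i)
      = 4 * ∑ j, (G.degree j : ℝ) * (dNeg n G s j : ℝ) ^ 2 := by
    rw [Finset.mul_sum]
    refine Finset.sum_congr rfl fun i _ => ?_
    rw [hw]
    ring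
  have e2 : ∑ i, w i * ∑ j, (if G.Adj i j then s i j * w j else 0)
      = 4 * ∑ i, ∑ j, (if G.Adj i j then s i j * (dNeg n G s i : ℝ) * (dNeg n G s j : ℝ) else 0) := by
    rw [Finset.mul_sum]
    refine Finset.sum_congr rfl fun i _ => ?_
    rw [Finset.mul_sum, Finset.mul_sum]
    refine Finset.sum_congr rfl fun j _ => ?_
    by_cases h : G.Adj i j <;> simp [h, hw] <;> ring
  rw [e1, e2]
  ring

/-- jᵀ L(Σ)³ j = 4 ∑_j d_j (d_j^-)² − 8 ∑_{e_ij ∈ E} σ(e_ij) d_i^- d_j^-. -/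
theorem stmt2 (n : ℕ) (G : SimpleGraph (Fin n)) [DecidableRel G.Adj]
    (s : Fin n → Fin n → ℝ) (hsym : ∀ i j, s i j = s j i)
    (hsgn : ∀ i j, G.Adj i j → s i j = 1 ∨ s i j = -1) :
    dotProduct (fun _ => (1 : ℝ)) (((lapMat n G s) ^ 3).mulVec fun _ => 1) =
      4 * ∑ j, (G.degree j : ℝ) * (dNeg n G s j : ℝ) ^ 2 -
        8 * edgeSum n G (fun i j => s i j * (dNeg n G s i : ℝ) * (dNeg n G s j : ℝ)) := by
  simpa only [edgeSum] using mainCalc n G s hsym hsgn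
end
end

section
/- For a signed graph Σ on n vertices, λ_max(L(Σ)) ≥ √((4/n)·∑_{j=1}^n (d_j^-)²). -/
open Matrix BigOperators

noncomputable section

lemma deg_sum (n : ℕ) (G : SimpleGraph (Fin n)) [DecidableRel G.Adj] (j : Fin n) :
    (G.degree j : ℝ) = ∑ k, if G.Adj j k then (1:ℝ) else 0 := by
  rw [SimpleGraph.degree, Finset.card_eq_sum_ones]
  push_cast
  rw [← Finset.sum_filter]
  congr 1
  ext k
  simp [SimpleGraph.neighborFinset]


lemma lap_quad_nonneg (n : ℕ) (G : SimpleGraph (Fin n)) [DecidableRel G.Adj]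
    (s : Fin n → Fin n → ℝ) (hsym : ∀ i j, s i j = s j i)
    (hsgn : ∀ i j, G.Adj i j → s i j = 1 ∨ s i j = -1) (x : Fin n → ℝ) :
    0 ≤ x ⬝ᵥ (lapMat n G s *ᵥ x) := by
  have key : 2 * (x ⬝ᵥ (lapMat n G s *ᵥ x)) =
      ∑ i, ∑ j, (if G.Adj i j then (x i - s i j * x j)^2 else 0) := by
    simp only [lapMat, adjMat, mulVec, dotProduct, Matrix.sub_apply, diagonal_apply]
    have expand : ∀ i j, (if G.Adj i j then (x i - s i j * x j)^2 else 0) =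
        (if G.Adj i j then x i^2 else 0) + (if G.Adj i j then x j^2 else 0)
          - 2 * (x i * (if G.Adj i j then s i j else 0) * x j) := by
      intro i j
      by_cases h : G.Adj i j
      · rcases hsgn i j h with hs | hs <;> simp [h, hs] <;> ring
      · simp [h]
    simp only [expand]
    have hA : ∀ i, ∑ j, (if G.Adj i j then x i ^ 2 else 0) = (G.degree i : ℝ) * x i ^ 2 := by
      intro i
      rw [deg_sum n G i, Finset.sum_mul]
      simp [ite_mul]
    have hB : ∑ i, ∑ j, (if G.Adj i j then x j ^ 2 else 0) =
        ∑ i, (G.degree i : ℝ) * x i ^ 2 := by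
      rw [Finset.sum_comm]
      apply Finset.sum_congr rfl
      intro j _
      rw [← hA j]
      exact Finset.sum_congr rfl fun i _ => by simp [G.adj_comm]
    simp only [Finset.sum_add_distrib, Finset.sum_sub_distrib, hA, hB]
    have hd : ∀ i, x i * (∑ j, (((if i = j then (G.degree i:ℝ) else 0)
        - if G.Adj i j then s i j else 0) * x j))
        = (G.degree i:ℝ) * x i ^ 2
          - ∑ j, x i * ((if G.Adj i j then s i j else 0) * x j) := by
      intro i
      rw [Finset.mul_sum]
      simp only [sub_mul, mul_sub, Finset.sum_sub_distrib]
      congr 1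
      simp only [ite_mul, zero_mul, mul_ite, mul_zero, Finset.sum_ite_eq, Finset.mem_univ,
        if_true]
      ring
    simp only [hd, Finset.sum_sub_distrib]
    have h2 : ∑ i, ∑ j, 2 * ((x i * (if G.Adj i j then s i j else 0)) * x j)
        = 2 * ∑ i, ∑ j, x i * ((if G.Adj i j then s i j else 0) * x j) := by
      rw [Finset.mul_sum]
      exact Finset.sum_congr rfl fun i _ => by
        rw [Finset.mul_sum]; exact Finset.sum_congr rfl fun j _ => by ring
    rw [h2]
    ring
  have hnn : 0 ≤ ∑ i, ∑ j, (if G.Adj i j then (x i - s i j * x j)^2 else 0) := by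
    apply Finset.sum_nonneg; intro i _
    apply Finset.sum_nonneg; intro j _
    by_cases h : G.Adj i j <;> simp [h] <;> positivity
  linarith

open Classical in
lemma dNeg_eq (n : ℕ) (G : SimpleGraph (Fin n)) (s : Fin n → Fin n → ℝ) (j : Fin n) :
    (dNeg n G s j : ℝ) = ∑ k, if G.Adj j k ∧ s j k = -1 then (1:ℝ) else 0 := by
  rw [dNeg, Nat.card_eq_fintype_card, Fintype.card_subtype]
  rw [← Finset.sum_filter]
  push_cast
  rw [Finset.card_eq_sum_ones]
  push_cast
  rfl

open Classical in
lemma lap_mulVec_one (n : ℕ) (G : SimpleGraph (Fin n)) [DecidableRel G.Adj]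
    (s : Fin n → Fin n → ℝ) (hsgn : ∀ i j, G.Adj i j → s i j = 1 ∨ s i j = -1) (j : Fin n) :
    (lapMat n G s *ᵥ (fun _ => (1:ℝ))) j = 2 * (dNeg n G s j : ℝ) := by
  rw [dNeg_eq]
  simp only [lapMat, adjMat, mulVec, dotProduct, Matrix.sub_apply, diagonal_apply, mul_one]
  rw [Finset.mul_sum, Finset.sum_sub_distrib]
  have h1 : ∑ k, ((if j = k then (G.degree j:ℝ) else 0)) = (G.degree j : ℝ) := by simp
  rw [h1, deg_sum n G j, ← Finset.sum_sub_distrib]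
  apply Finset.sum_congr rfl
  intro k _
  by_cases h : G.Adj j k
  · rcases hsgn j k h with hs | hs <;> norm_num [h, hs]
  · simp [h]



/-- λ_max(L(Σ)) ≥ √((4/n) ∑_j (d_j^-)²). -/
theorem stmt4 (n : ℕ) (hn : 0 < n) (G : SimpleGraph (Fin n)) [DecidableRel G.Adj]
    (s : Fin n → Fin n → ℝ) (hsym : ∀ i j, s i j = s j i)
    (hsgn : ∀ i j, G.Adj i j → s i j = 1 ∨ s i j = -1)
    (hL : (lapMat n G s).IsHermitian) :
    Real.sqrt ((4 / (n : ℝ)) * ∑ j, (dNeg n G s j : ℝ) ^ 2) ≤ ⨆ i, hL.eigenvalues i := by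
  classical
  haveI : Nonempty (Fin n) := ⟨⟨0, hn⟩⟩
  set μ := ⨆ i, hL.eigenvalues i with hμdef
  have hev_nonneg : ∀ i, 0 ≤ hL.eigenvalues i := by
    intro i
    rw [hL.eigenvalues_eq]
    simpa using lap_quad_nonneg n G s hsym hsgn (hL.eigenvectorBasis i)
  have hub : ∀ i, hL.eigenvalues i ≤ μ := fun i =>
    le_ciSup (Set.Finite.bddAbove (Set.finite_range _)) i
  have hμ0 : 0 ≤ μ := le_trans (hev_nonneg ⟨0, hn⟩) (hub _)
  set U : Matrix (Fin n) (Fin n) ℝ := (hL.eigenvectorUnitary : Matrix (Fin n) (Fin n) ℝ) with hUdef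
  have hU1 : star U * U = 1 := mem_unitaryGroup_iff'.mp hL.eigenvectorUnitary.2
  have hU2 : U * star U = 1 := mem_unitaryGroup_iff.mp hL.eigenvectorUnitary.2
  have horth : ∀ a b : Fin n → ℝ, (U *ᵥ a) ⬝ᵥ (U *ᵥ b) = a ⬝ᵥ b := by
    intro a b
    have hU1' : Uᵀ * U = 1 := by simpa [Matrix.star_eq_conjTranspose] using hU1
    have h1 : (U *ᵥ a) = a ᵥ* Uᵀ := by simpa using star_mulVec U a
    rw [h1, dotProduct_mulVec, vecMul_vecMul, hU1', vecMul_one]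
  set y : Fin n → ℝ := star U *ᵥ (fun _ => (1:ℝ)) with hydef
  have hUy : U *ᵥ y = fun _ => (1:ℝ) := by
    rw [hydef, mulVec_mulVec, hU2, one_mulVec]
  have hL1 : lapMat n G s *ᵥ (fun _ => (1:ℝ)) = U *ᵥ (fun i => hL.eigenvalues i * y i) := by
    conv_lhs => rw [hL.spectral_theorem, Unitary.conjStarAlgAut_apply]
    rw [← mulVec_mulVec, ← mulVec_mulVec]
    exact congrArg (fun w => U *ᵥ w) (funext fun i => by
      rw [mulVec_diagonal]
      simp [RCLike.ofReal_real_eq_id, hydef, hUdef])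
  have hQ : (lapMat n G s *ᵥ (fun _ => (1:ℝ))) ⬝ᵥ (lapMat n G s *ᵥ (fun _ => (1:ℝ)))
      = ∑ i, (hL.eigenvalues i * y i)^2 := by
    rw [hL1, horth]
    simp [dotProduct, sq]
  have hy : ∑ i, (y i)^2 = (n : ℝ) := by
    have h := horth y y
    rw [hUy] at h
    simp [dotProduct, sq] at h ⊢
    rw [← h]
  have hQ' : (lapMat n G s *ᵥ (fun _ => (1:ℝ))) ⬝ᵥ (lapMat n G s *ᵥ (fun _ => (1:ℝ)))
      = 4 * ∑ j, (dNeg n G s j : ℝ)^2 := by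
    simp only [dotProduct, lap_mulVec_one n G s hsgn]
    rw [Finset.mul_sum]
    exact Finset.sum_congr rfl fun j _ => by ring
  have hsum : 4 * ∑ j, (dNeg n G s j : ℝ)^2 ≤ μ^2 * n := by
    rw [← hQ', hQ, ← hy, Finset.mul_sum]
    apply Finset.sum_le_sum
    intro i _
    rw [mul_pow]
    have : hL.eigenvalues i ^ 2 ≤ μ ^ 2 := by
      nlinarith [hev_nonneg i, hub i]
    nlinarith [sq_nonneg (y i)]
  have hfin : (4 / (n : ℝ)) * ∑ j, (dNeg n G s j : ℝ)^2 ≤ μ^2 := by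
    rw [div_mul_eq_mul_div, div_le_iff₀ (by positivity : (0:ℝ) < n)]
    linarith
  calc Real.sqrt ((4 / (n : ℝ)) * ∑ j, (dNeg n G s j : ℝ)^2)
      ≤ Real.sqrt (μ^2) := Real.sqrt_le_sqrt hfin
    _ = μ := Real.sqrt_sq hμ0
end
end

section
/- For any signed graph Σ, tr(L(Σ)³) = s_3 + 3s_2 − 6·t^±(Σ), where s_p = ∑_{j=1}^n d_j^p and t^±(Σ) = t^+(Σ) − t^-(Σ) is the number of positively-signed triangles minus the number of negatively-signed triangles in Σ. -/
open Matrix BigOperators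

noncomputable section

/-- tr(L(Σ)³) = s₃ + 3s₂ − 6 t^±(Σ). -/
theorem stmt8 (n : ℕ) (G : SimpleGraph (Fin n)) [DecidableRel G.Adj]
    (s : Fin n → Fin n → ℝ) (hsym : ∀ i j, s i j = s j i)
    (hsgn : ∀ i j, G.Adj i j → s i j = 1 ∨ s i j = -1) :
    ((lapMat n G s) ^ 3).trace =
      ∑ j, (G.degree j : ℝ) ^ 3 + 3 * ∑ j, (G.degree j : ℝ) ^ 2 - 6 * tPM n G s := by
  classical
  set d : Fin n → ℝ := fun i => (G.degree i : ℝ) with hd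
  set D : Matrix (Fin n) (Fin n) ℝ := Matrix.diagonal d with hDdef
  set A : Matrix (Fin n) (Fin n) ℝ := adjMat n G s with hAdef
  have hAsym : ∀ i j, A i j = A j i := by
    intro i j
    simp only [hAdef, adjMat]
    by_cases h : G.Adj i j
    · simp [h, h.symm, hsym i j]
    · have h' : ¬ G.Adj j i := fun hh => h hh.symm
      simp [h, h']
  have hAdiag : ∀ i, A i i = 0 := by
    intro i; simp [hAdef, adjMat]
  have hdeg : ∀ i, ∑ j, (if G.Adj i j then (1:ℝ) else 0) = d i := by
    intro i
    rw [Finset.sum_boole, hd]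
    rw [show (Finset.filter (fun x => G.Adj i x) Finset.univ) = G.neighborFinset i from
      (G.neighborFinset_eq_filter).symm]
    rfl
  have hAA : ∀ i, (A * A) i i = d i := by
    intro i
    rw [Matrix.mul_apply, ← hdeg i]
    apply Finset.sum_congr rfl
    intro j _
    rw [hAsym j i]
    simp only [hAdef, adjMat]
    by_cases h : G.Adj i j
    · rcases hsgn i j h with h1 | h1 <;> simp [h, h1]
    · simp [h]
  have trD3 : (D * D * D).trace = ∑ j, d j ^ 3 := by
    simp only [hDdef, Matrix.diagonal_mul_diagonal, Matrix.trace_diagonal, Pi.mul_apply]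
    exact Finset.sum_congr rfl fun j _ => by ring
  have trDDA : (D * D * A).trace = 0 := by
    simp only [hDdef, Matrix.diagonal_mul_diagonal, Matrix.trace, Matrix.diag,
      Matrix.diagonal_mul, Pi.mul_apply]
    simp [hAdiag]
  have trDAA : (D * (A * A)).trace = ∑ j, d j ^ 2 := by
    simp only [hDdef, Matrix.trace, Matrix.diag, Matrix.diagonal_mul]
    exact Finset.sum_congr rfl fun j _ => by rw [hAA j]; ring
  have trA3 : (A * A * A).trace = 6 * tPM n G s := by
    have h6 : 6 * tPM n G s = ∑ i, ∑ j, ∑ k, if G.Adj i j ∧ G.Adj j k ∧ G.Adj k i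
        then s i j * s j k * s k i else 0 := by
      rw [tPM]; ring
    rw [h6]
    simp only [Matrix.trace, Matrix.diag, Matrix.mul_apply, Finset.sum_mul]
    rw [Finset.sum_congr rfl fun i _ => Finset.sum_comm]
    apply Finset.sum_congr rfl; intro i _
    apply Finset.sum_congr rfl; intro j _
    apply Finset.sum_congr rfl; intro k _
    simp only [hAdef, adjMat]
    by_cases h1 : G.Adj i j <;> by_cases h2 : G.Adj j k <;> by_cases h3 : G.Adj k i <;>
      simp [h1, h2, h3]
  have hL : lapMat n G s = D - A := rfl
  have key : (lapMat n G s) ^ 3 =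
      D*D*D - D*D*A - D*A*D - A*D*D + D*A*A + A*D*A + A*A*D - A*A*A := by
    rw [pow_succ, pow_succ, pow_one, hL]
    noncomm_ring
  have e1 : (D*A*D).trace = (D*D*A).trace := by
    rw [Matrix.trace_mul_comm, ← mul_assoc]
  have e2 : (A*D*D).trace = (D*D*A).trace := by
    rw [Matrix.trace_mul_comm, ← mul_assoc, Matrix.trace_mul_comm, ← mul_assoc]
  have e3 : (D*A*A).trace = (D*(A*A)).trace := by rw [mul_assoc]
  have e4 : (A*D*A).trace = (D*(A*A)).trace := by
    rw [Matrix.trace_mul_comm, ← mul_assoc, Matrix.trace_mul_comm]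
  have e5 : (A*A*D).trace = (D*(A*A)).trace := by rw [Matrix.trace_mul_comm]
  rw [key]
  simp only [Matrix.trace_sub, Matrix.trace_add]
  rw [e1, e2, e3, e4, e5, trD3, trDDA, trDAA, trA3]
  ring
end
end

section
/- Let Σ be a signed graph with at least one edge, and let b(Σ) denote the number of balanced connected components. Then λ_max(L(Σ)) ≤ s_1/(n−b(Σ)) + √((s_1+s_2) − (s_1+s_2+s_1²)/(n−b(Σ)) + (s_1/(n−b(Σ)))²), where s_p = ∑_j d_j^p. -/
open Matrix BigOperators

noncomputable section

lemma sum_eig_eq_trace {m : ℕ} (A : Matrix (Fin m) (Fin m) ℝ) (hA : A.IsHermitian) :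
    ∑ i, hA.eigenvalues i = A.trace := by
  have hU : star (hA.eigenvectorUnitary : Matrix (Fin m) (Fin m) ℝ) *
      (hA.eigenvectorUnitary : Matrix (Fin m) (Fin m) ℝ) = 1 :=
    Matrix.mem_unitaryGroup_iff'.mp hA.eigenvectorUnitary.2
  conv_rhs => rw [hA.spectral_theorem, Unitary.conjStarAlgAut_apply]
  rw [Matrix.trace_mul_comm, ← Matrix.mul_assoc, hU, Matrix.one_mul]
  simp [Matrix.trace_diagonal, RCLike.ofReal_real_eq_id]

lemma sum_eig_sq_eq_trace {m : ℕ} (A : Matrix (Fin m) (Fin m) ℝ) (hA : A.IsHermitian) :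
    ∑ i, hA.eigenvalues i ^ 2 = (A * A).trace := by
  set U : Matrix (Fin m) (Fin m) ℝ := (hA.eigenvectorUnitary : Matrix (Fin m) (Fin m) ℝ) with hUdef
  set D : Matrix (Fin m) (Fin m) ℝ := Matrix.diagonal (RCLike.ofReal ∘ hA.eigenvalues) with hDdef
  have hU : star U * U = 1 := Matrix.mem_unitaryGroup_iff'.mp hA.eigenvectorUnitary.2
  have hAeq : A = U * D * star U := hA.spectral_theorem
  have h2 : A * A = U * (D * D) * star U := by
    rw [hAeq, show U * D * star U * (U * D * star U) = U * D * (star U * U) * (D * star U) by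
      simp only [Matrix.mul_assoc], hU]
    simp only [Matrix.mul_one, Matrix.mul_assoc, Matrix.one_mul]
  rw [h2, Matrix.trace_mul_comm, ← Matrix.mul_assoc, hU, Matrix.one_mul]
  rw [hDdef, Matrix.diagonal_mul_diagonal]
  simp [Matrix.trace_diagonal, RCLike.ofReal_real_eq_id, pow_two]

lemma quad_nonneg (n : ℕ) (G : SimpleGraph (Fin n)) [DecidableRel G.Adj]
    (s : Fin n → Fin n → ℝ) (hsym : ∀ i j, s i j = s j i)
    (hsgn : ∀ i j, G.Adj i j → s i j = 1 ∨ s i j = -1) (x : Fin n → ℝ) :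
    0 ≤ x ⬝ᵥ lapMat n G s *ᵥ x := by
  have deg_mul : ∀ (c : ℝ) (i : Fin n), (G.degree i : ℝ) * c = ∑ j, if G.Adj i j then c else 0 := by
    intro c i
    rw [SimpleGraph.degree_eq_sum_if_adj (R := ℝ) G i, Finset.sum_mul]
    exact Finset.sum_congr rfl fun j _ => by split_ifs <;> ring
  have expand : x ⬝ᵥ lapMat n G s *ᵥ x =
      ∑ i, ∑ j, ((if i = j then (G.degree i : ℝ) * (x i * x j) else 0)
        - (if G.Adj i j then s i j * (x i * x j) else 0)) := by
    simp only [lapMat, dotProduct, Matrix.mulVec, Matrix.sub_apply, Matrix.diagonal_apply, adjMat]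
    refine Finset.sum_congr rfl fun i _ => ?_
    rw [Finset.mul_sum]
    refine Finset.sum_congr rfl fun j _ => ?_
    split_ifs <;> ring
  have expand2 : x ⬝ᵥ lapMat n G s *ᵥ x =
      ∑ i, (G.degree i : ℝ) * (x i * x i)
        - ∑ i, ∑ j, (if G.Adj i j then s i j * (x i * x j) else 0) := by
    rw [expand]
    simp only [Finset.sum_sub_distrib]
    congr 1
    refine Finset.sum_congr rfl fun i _ => ?_
    rw [Finset.sum_ite_eq]
    simp
  have swap : ∑ i, ∑ j, (if G.Adj i j then x j * x j else 0) =
      ∑ i, ∑ j, (if G.Adj i j then x i * x i else 0) := by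
    rw [Finset.sum_comm]
    exact Finset.sum_congr rfl fun i _ => Finset.sum_congr rfl fun j _ =>
      if_congr (G.adj_comm j i) rfl rfl
  have hS1 : ∑ i, ∑ j, (if G.Adj i j then x i * x i else 0)
      = ∑ i, (G.degree i : ℝ) * (x i * x i) :=
    Finset.sum_congr rfl fun i _ => (deg_mul (x i * x i) i).symm
  have key : 2 * (x ⬝ᵥ lapMat n G s *ᵥ x) =
      ∑ i, ∑ j, (if G.Adj i j then (x i - s i j * x j) ^ 2 else 0) := by
    have e1 : ∀ i j, (if G.Adj i j then (x i - s i j * x j) ^ 2 else 0) =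
        (if G.Adj i j then x i * x i else 0) + (if G.Adj i j then x j * x j else 0)
          - 2 * (if G.Adj i j then s i j * (x i * x j) else 0) := by
      intro i j
      split_ifs with h
      · rcases hsgn i j h with h1 | h1 <;> rw [h1] <;> ring
      · ring
    simp_rw [e1]
    simp only [Finset.sum_sub_distrib, Finset.sum_add_distrib, ← Finset.mul_sum]
    rw [swap, hS1, expand2]
    ring
  have hnn : 0 ≤ ∑ i, ∑ j, (if G.Adj i j then (x i - s i j * x j) ^ 2 else 0) := by
    refine Finset.sum_nonneg fun i _ => Finset.sum_nonneg fun j _ => ?_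
    split_ifs <;> positivity
  linarith [key ▸ hnn]

lemma trace_lap (n : ℕ) (G : SimpleGraph (Fin n)) [DecidableRel G.Adj]
    (s : Fin n → Fin n → ℝ) : (lapMat n G s).trace = ∑ j, (G.degree j : ℝ) := by
  simp [lapMat, adjMat, Matrix.trace, Matrix.diag, Matrix.diagonal]

lemma trace_lap_sq (n : ℕ) (G : SimpleGraph (Fin n)) [DecidableRel G.Adj]
    (s : Fin n → Fin n → ℝ) (hsym : ∀ i j, s i j = s j i)
    (hsgn : ∀ i j, G.Adj i j → s i j = 1 ∨ s i j = -1) :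
    (lapMat n G s * lapMat n G s).trace
      = ∑ j, (G.degree j : ℝ) + ∑ j, (G.degree j : ℝ) ^ 2 := by
  have hLsym : ∀ i j, lapMat n G s j i = lapMat n G s i j := by
    intro i j
    simp only [lapMat, adjMat, Matrix.sub_apply]
    rw [hsym j i]
    congr 1
    · rw [Matrix.diagonal_apply, Matrix.diagonal_apply]
      by_cases h : i = j
      · subst h; rfl
      · rw [if_neg h, if_neg (Ne.symm h)]
    · exact if_congr (G.adj_comm j i) rfl rfl
  have htr : (lapMat n G s * lapMat n G s).trace
      = ∑ i, ∑ j, lapMat n G s i j * lapMat n G s i j := by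
    simp only [Matrix.trace, Matrix.diag, Matrix.mul_apply]
    exact Finset.sum_congr rfl fun i _ => Finset.sum_congr rfl fun j _ => by rw [hLsym i j]
  rw [htr]
  have e1 : ∀ i j, lapMat n G s i j * lapMat n G s i j =
      (if i = j then (G.degree i : ℝ) ^ 2 else 0) + (if G.Adj i j then 1 else 0) := by
    intro i j
    by_cases hij : i = j
    · subst hij
      simp [lapMat, adjMat, Matrix.diagonal, G.irrefl, pow_two]
    · simp only [lapMat, adjMat, Matrix.sub_apply, Matrix.diagonal_apply, if_neg hij, zero_sub,
        neg_mul_neg, zero_add]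
      split_ifs with h
      · rcases hsgn i j h with h1 | h1 <;> rw [h1] <;> ring
      · ring
  simp_rw [e1]
  simp only [Finset.sum_add_distrib]
  rw [add_comm]
  congr 1
  · exact Finset.sum_congr rfl fun i _ =>
      (SimpleGraph.degree_eq_sum_if_adj (R := ℝ) G i).symm
  · refine Finset.sum_congr rfl fun i _ => ?_
    rw [Finset.sum_ite_eq]
    simp

lemma ker_vec (n : ℕ) (G : SimpleGraph (Fin n)) [DecidableRel G.Adj]
    [DecidableEq G.ConnectedComponent]
    (s : Fin n → Fin n → ℝ) (c : G.ConnectedComponent) (θ : Fin n → ℝ)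
    (hθ1 : ∀ v, θ v = 1 ∨ θ v = -1)
    (hθ2 : ∀ i j, G.Adj i j → G.connectedComponentMk i = c → s i j = θ i * θ j) :
    lapMat n G s *ᵥ (fun i => if G.connectedComponentMk i = c then θ i else 0) = 0 := by
  set v : Fin n → ℝ := fun i => if G.connectedComponentMk i = c then θ i else 0 with hv
  funext i
  have deg_mul : (G.degree i : ℝ) * v i = ∑ j, if G.Adj i j then v i else 0 := by
    rw [SimpleGraph.degree_eq_sum_if_adj (R := ℝ) G i, Finset.sum_mul]
    exact Finset.sum_congr rfl fun j _ => by split_ifs <;> ring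
  have hA : (adjMat n G s *ᵥ v) i = ∑ j, if G.Adj i j then s i j * v j else 0 := by
    simp only [adjMat, Matrix.mulVec, dotProduct, ite_mul, zero_mul]
  show (lapMat n G s *ᵥ v) i = 0
  simp only [lapMat, Matrix.sub_mulVec, Pi.sub_apply, Matrix.mulVec_diagonal]
  rw [hA, deg_mul, ← Finset.sum_sub_distrib]
  refine Finset.sum_eq_zero fun j _ => ?_
  by_cases h : G.Adj i j
  · rw [if_pos h, if_pos h]
    have hmk : G.connectedComponentMk j = G.connectedComponentMk i :=
      SimpleGraph.ConnectedComponent.eq.mpr h.symm.reachable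
    by_cases hc : G.connectedComponentMk i = c
    · have hcj : G.connectedComponentMk j = c := hmk.trans hc
      have hvi : v i = θ i := by rw [hv]; exact if_pos hc
      have hvj : v j = θ j := by rw [hv]; exact if_pos hcj
      rw [hvi, hvj, hθ2 i j h hc]
      rcases hθ1 j with h1 | h1 <;> rw [h1] <;> ring
    · have hcj : ¬ G.connectedComponentMk j = c := fun hh => hc (hmk ▸ hh)
      have hvi : v i = 0 := by rw [hv]; exact if_neg hc
      have hvj : v j = 0 := by rw [hv]; exact if_neg hcj
      rw [hvi, hvj]; ring
  · rw [if_neg h, if_neg h]; ring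

lemma numBalanced_add_rank_le (n : ℕ) (G : SimpleGraph (Fin n)) [DecidableRel G.Adj]
    (s : Fin n → Fin n → ℝ) :
    numBalanced n G s + (lapMat n G s).rank ≤ n := by
  classical
  set B := {c : G.ConnectedComponent //
    ∃ θ : Fin n → ℝ, (∀ v, θ v = 1 ∨ θ v = -1) ∧
      ∀ i j, G.Adj i j → G.connectedComponentMk i = c → s i j = θ i * θ j} with hB
  haveI : Fintype B := Fintype.ofFinite B
  have hbc : numBalanced n G s = Fintype.card B := by
    rw [numBalanced, Nat.card_eq_fintype_card]
  let θf : B → Fin n → ℝ := fun c => c.2.choose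
  have hθ1 : ∀ c : B, ∀ v, θf c v = 1 ∨ θf c v = -1 := fun c => c.2.choose_spec.1
  have hθ2 : ∀ c : B, ∀ i j, G.Adj i j → G.connectedComponentMk i = c.1 →
      s i j = θf c i * θf c j := fun c => c.2.choose_spec.2
  let vec : B → Fin n → ℝ := fun c i => if G.connectedComponentMk i = c.1 then θf c i else 0
  have hθne : ∀ c : B, ∀ v, θf c v ≠ 0 := by
    intro c v; rcases hθ1 c v with h | h <;> rw [h] <;> norm_num
  have hker : ∀ c : B, lapMat n G s *ᵥ vec c = 0 :=
    fun c => ker_vec n G s c.1 (θf c) (hθ1 c) (hθ2 c)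
  have hli : LinearIndependent ℝ vec := by
    rw [Fintype.linearIndependent_iff]
    intro g hg c₀
    obtain ⟨i, hi⟩ := c₀.1.exists_rep
    have hgi := congrFun hg i
    simp only [Finset.sum_apply, Pi.smul_apply, smul_eq_mul, Pi.zero_apply] at hgi
    rw [Finset.sum_eq_single c₀] at hgi
    · have hvi : vec c₀ i = θf c₀ i := by simp only [vec]; exact if_pos hi
      rw [hvi] at hgi
      exact (mul_eq_zero.mp hgi).resolve_right (hθne c₀ i)
    · intro c _ hne
      have hvi : vec c i = 0 := by
        simp only [vec]
        refine if_neg fun hh => hne (Subtype.ext ?_)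
        rw [← hh]; exact hi
      rw [hvi, mul_zero]
    · intro h; exact absurd (Finset.mem_univ c₀) h
  have hli' : LinearIndependent ℝ (fun c : B =>
      (⟨vec c, by rw [LinearMap.mem_ker, Matrix.mulVecLin_apply]; exact hker c⟩ :
        LinearMap.ker (lapMat n G s).mulVecLin)) := by
    refine LinearIndependent.of_comp ((LinearMap.ker (lapMat n G s).mulVecLin).subtype) ?_
    exact hli
  have h1 : Fintype.card B ≤ Module.finrank ℝ (LinearMap.ker (lapMat n G s).mulVecLin) :=
    hli'.fintype_card_le_finrank
  have h2 := LinearMap.finrank_range_add_finrank_ker (lapMat n G s).mulVecLin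
  rw [Module.finrank_pi, Fintype.card_fin] at h2
  have hrank : (lapMat n G s).rank
      = Module.finrank ℝ (LinearMap.range (lapMat n G s).mulVecLin) := rfl
  omega


/-- Upper bound: λ_max(L(Σ)) ≤ s₁/(n−b) + √((s₁+s₂) − (s₁+s₂+s₁²)/(n−b) + (s₁/(n−b))²). -/
theorem stmt9 (n : ℕ) (G : SimpleGraph (Fin n)) [DecidableRel G.Adj]
    (s : Fin n → Fin n → ℝ) (hsym : ∀ i j, s i j = s j i)
    (hsgn : ∀ i j, G.Adj i j → s i j = 1 ∨ s i j = -1)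
    (hE : G.edgeFinset.Nonempty)
    (hL : (lapMat n G s).IsHermitian) :
    (⨆ i, hL.eigenvalues i) ≤
      (∑ j, (G.degree j : ℝ)) / ((n : ℝ) - numBalanced n G s) +
      Real.sqrt ((∑ j, (G.degree j : ℝ) + ∑ j, (G.degree j : ℝ) ^ 2) -
        (∑ j, (G.degree j : ℝ) + ∑ j, (G.degree j : ℝ) ^ 2 + (∑ j, (G.degree j : ℝ)) ^ 2) /
          ((n : ℝ) - numBalanced n G s) +
        ((∑ j, (G.degree j : ℝ)) / ((n : ℝ) - numBalanced n G s)) ^ 2) := by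
  classical
  obtain ⟨a, bv, hab⟩ : ∃ a bv, G.Adj a bv := by
    obtain ⟨e, he⟩ := hE
    rw [SimpleGraph.mem_edgeFinset] at he
    obtain ⟨⟨u, v⟩, hrep⟩ := Quot.exists_rep e
    rw [← hrep] at he
    exact ⟨u, v, G.mem_edgeSet.mp he⟩
  haveI : Nonempty (Fin n) := ⟨a⟩
  set lam := hL.eigenvalues with hlam
  set T := ∑ j, (G.degree j : ℝ) with hTdef
  set S2 := ∑ j, (G.degree j : ℝ) ^ 2 with hS2def
  set b := numBalanced n G s with hbdef
  set R := (n : ℝ) - (b : ℝ) with hRdef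
  have hTsum : ∑ i, lam i = T := (sum_eig_eq_trace _ hL).trans (trace_lap n G s)
  have hSsum : ∑ i, lam i ^ 2 = T + S2 :=
    (sum_eig_sq_eq_trace _ hL).trans (trace_lap_sq n G s hsym hsgn)
  have hpsd : (lapMat n G s).PosSemidef :=
    Matrix.posSemidef_iff_dotProduct_mulVec.mpr
      ⟨hL, fun x => by rw [star_trivial]; exact quad_nonneg n G s hsym hsgn x⟩
  have hnn : ∀ i, 0 ≤ lam i := fun i => hpsd.eigenvalues_nonneg i
  have hble : b + (lapMat n G s).rank ≤ n := numBalanced_add_rank_le n G s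
  have hcnt : (Finset.univ.filter fun i => ¬ lam i = 0).card = (lapMat n G s).rank := by
    rw [Matrix.IsHermitian.rank_eq_card_non_zero_eigs hL, Fintype.card_subtype]
  have hZcard : (Finset.univ.filter fun i => lam i = 0).card + (lapMat n G s).rank = n := by
    have h := Finset.card_filter_add_card_filter_not
      (s := (Finset.univ : Finset (Fin n))) (p := fun i => lam i = 0)
    rw [Finset.card_univ, Fintype.card_fin] at h
    rw [← hcnt]
    convert h using 3
  have hbZ : b ≤ (Finset.univ.filter fun i => lam i = 0).card := by omega
  obtain ⟨Z', hZ'sub, hZ'card⟩ := Finset.exists_subset_card_eq hbZ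
  have hzero : ∀ i ∈ Z', lam i = 0 := fun i hi => (Finset.mem_filter.mp (hZ'sub hi)).2
  obtain ⟨i₀, hi₀⟩ := exists_eq_ciSup_of_finite (f := lam)
  set M := ⨆ i, lam i with hMdef
  have hMub : ∀ j, lam j ≤ M := fun j => le_ciSup (Set.Finite.bddAbove (Set.finite_range lam)) j
  have hTpos : 0 < T := by
    have h1 : (1 : ℝ) ≤ (G.degree a : ℝ) := by
      have : 0 < G.degree a := G.degree_pos_iff_exists_adj a |>.mpr ⟨bv, hab⟩
      exact_mod_cast this
    have h2 : ∀ j ∈ Finset.univ, (0 : ℝ) ≤ (G.degree j : ℝ) := fun j _ => Nat.cast_nonneg _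
    have := Finset.single_le_sum h2 (Finset.mem_univ a)
    rw [hTdef]; linarith
  have hMpos : 0 < M := by
    by_contra h
    push_neg at h
    have : T ≤ 0 := by
      rw [← hTsum]
      exact Finset.sum_nonpos fun j _ => (hMub j).trans h
    linarith
  have hi₀Z' : i₀ ∉ Z' := by
    intro hmem
    rw [hzero i₀ hmem] at hi₀
    linarith [hi₀ ▸ hMpos]
  set K := insert i₀ Z' with hKdef
  have hKcard : K.card = b + 1 := by
    rw [hKdef, Finset.card_insert_of_notMem hi₀Z', hZ'card]
  have hKn : b + 1 ≤ n := by
    calc b + 1 = K.card := hKcard.symm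
    _ ≤ Fintype.card (Fin n) := Finset.card_le_univ K
    _ = n := Fintype.card_fin n
  have hFcard : (Finset.univ \ K).card = n - (b + 1) := by
    rw [Finset.card_sdiff_of_subset (Finset.subset_univ K), Finset.card_univ, Fintype.card_fin, hKcard]
  have hsplit : ∀ f : Fin n → ℝ,
      ∑ i ∈ Finset.univ \ K, f i = ∑ i, f i - f i₀ - ∑ i ∈ Z', f i := by
    intro f
    have h1 : ∑ i ∈ Finset.univ \ K, f i + ∑ i ∈ K, f i = ∑ i, f i :=
      Finset.sum_sdiff (Finset.subset_univ K)
    have h2 : ∑ i ∈ K, f i = f i₀ + ∑ i ∈ Z', f i := Finset.sum_insert hi₀Z'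
    linarith
  have hF1 : ∑ i ∈ Finset.univ \ K, lam i = T - M := by
    rw [hsplit, hTsum, hi₀, Finset.sum_eq_zero hzero]; ring
  have hF2 : ∑ i ∈ Finset.univ \ K, lam i ^ 2 = (T + S2) - M ^ 2 := by
    have hz2 : ∑ i ∈ Z', lam i ^ 2 = 0 :=
      Finset.sum_eq_zero fun i hi => by rw [hzero i hi]; ring
    rw [hsplit, hSsum, hi₀, hz2]; ring
  have hCS := sq_sum_le_card_mul_sum_sq (s := Finset.univ \ K) (f := lam)
  rw [hF1, hF2, hFcard] at hCS
  have hcast : ((n - (b + 1) : ℕ) : ℝ) = R - 1 := by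
    rw [Nat.cast_sub hKn, hRdef]; push_cast; ring
  rw [hcast] at hCS
  have hR1 : (1 : ℝ) ≤ R := by
    rw [hRdef]
    have : ((b : ℝ) + 1) ≤ (n : ℝ) := by exact_mod_cast hKn
    linarith
  have hR0 : (0 : ℝ) < R := lt_of_lt_of_le one_pos hR1
  have h2 : (R * M - T) ^ 2 ≤ (R - 1) * (R * (T + S2) - T ^ 2) := by
    nlinarith [hCS, hR0, hR1, mul_le_mul_of_nonneg_left hCS hR0.le]
  have hX : 0 ≤ (R - 1) * (R * (T + S2) - T ^ 2) := le_trans (sq_nonneg _) h2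
  have hsqrt : R * M - T ≤ Real.sqrt ((R - 1) * (R * (T + S2) - T ^ 2)) := by
    calc R * M - T ≤ |R * M - T| := le_abs_self _
    _ = Real.sqrt ((R * M - T) ^ 2) := (Real.sqrt_sq_eq_abs _).symm
    _ ≤ _ := Real.sqrt_le_sqrt h2
  have hEeq : (T + S2) - (T + S2 + T ^ 2) / R + (T / R) ^ 2
      = ((R - 1) * (R * (T + S2) - T ^ 2)) / R ^ 2 := by
    field_simp
    ring
  rw [hEeq, Real.sqrt_div hX, Real.sqrt_sq hR0.le, ← add_div, le_div_iff₀ hR0]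
  nlinarith [hsqrt]
end
end

section
/- Let Σ be a signed graph with b(Σ) ≤ n−2. Then λ_max(L(Σ)) ≥ (|s_1(s_1+s_2) − (s_3 + 3s_2 − 6t^±(Σ))|/((n−b(Σ))(n−b(Σ)−1)))^{1/3}. -/
open Matrix BigOperators

noncomputable section

-- ===== auxiliary lemmas =====

lemma conj_pow_aux {n : ℕ} (U D : Matrix (Fin n) (Fin n) ℝ) (hU : star U * U = 1)
    (k : ℕ) : (U * D * star U) ^ (k+1) = U * D ^ (k+1) * star U := by
  induction k with
  | zero => simp
  | succ k ih =>
    rw [pow_succ, ih, pow_succ]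
    calc U * D ^ (k+1) * star U * (U * D * star U)
        = U * D ^ (k+1) * (star U * U) * (D * star U) := by
          simp only [mul_assoc]
      _ = U * (D ^ (k+1) * D) * star U := by rw [hU]; simp only [mul_one, mul_assoc]

lemma trace_pow_eq {n : ℕ} (A : Matrix (Fin n) (Fin n) ℝ) (hA : A.IsHermitian) (k : ℕ) :
    (A ^ (k+1)).trace = ∑ i, hA.eigenvalues i ^ (k+1) := by
  have hU : star (hA.eigenvectorUnitary : Matrix (Fin n) (Fin n) ℝ) * hA.eigenvectorUnitary = 1 :=
    (Matrix.mem_unitaryGroup_iff').mp hA.eigenvectorUnitary.2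
  conv_lhs => rw [hA.spectral_theorem, Unitary.conjStarAlgAut_apply]
  rw [conj_pow_aux _ _ hU, trace_mul_cycle, hU, one_mul,
    diagonal_pow, trace_diagonal]
  simp [RCLike.ofReal_real_eq_id]

section
variable (n : ℕ) (G : SimpleGraph (Fin n)) [DecidableRel G.Adj]
    (s : Fin n → Fin n → ℝ) (hsym : ∀ i j, s i j = s j i)
    (hsgn : ∀ i j, G.Adj i j → s i j = 1 ∨ s i j = -1)

lemma deg_eq_sum' (i : Fin n) : ∑ j, (if G.Adj i j then (1:ℝ) else 0) = (G.degree i : ℝ) := by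
  rw [Finset.sum_boole, SimpleGraph.degree]
  congr 1
  rw [SimpleGraph.neighborFinset_eq_filter]

include hsym hsgn in
lemma adj_mul_self (i j : Fin n) :
    adjMat n G s i j * adjMat n G s j i = if G.Adj i j then (1:ℝ) else 0 := by
  unfold adjMat
  by_cases h : G.Adj i j
  · rw [if_pos h, if_pos h.symm, if_pos h, ← hsym i j]
    rcases hsgn i j h with h1 | h1 <;> rw [h1] <;> norm_num
  · rw [if_neg h, if_neg h, zero_mul]

include hsym hsgn in
lemma trace_A2 : (adjMat n G s * adjMat n G s).trace = ∑ j, (G.degree j : ℝ) := by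
  simp only [Matrix.trace, Matrix.diag, Matrix.mul_apply]
  refine Finset.sum_congr rfl fun i _ => ?_
  rw [← deg_eq_sum']
  exact Finset.sum_congr rfl fun j _ => adj_mul_self n G s hsym hsgn i j

include hsym hsgn in
lemma trace_DA2 :
    (Matrix.diagonal (fun i => (G.degree i : ℝ)) * (adjMat n G s * adjMat n G s)).trace
      = ∑ j, (G.degree j : ℝ) ^ 2 := by
  have : ∀ (d : Fin n → ℝ) (M : Matrix (Fin n) (Fin n) ℝ),
      (Matrix.diagonal d * M).trace = ∑ i, d i * M i i := by
    intro d M; simp [Matrix.trace, Matrix.diag, Matrix.diagonal_mul]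
  rw [this]
  refine Finset.sum_congr rfl fun i _ => ?_
  rw [Matrix.mul_apply, show ∑ j, adjMat n G s i j * adjMat n G s j i = (G.degree i : ℝ) by
    rw [← deg_eq_sum']; exact Finset.sum_congr rfl fun j _ => adj_mul_self n G s hsym hsgn i j]
  ring

lemma trace_A3 : (adjMat n G s * adjMat n G s * adjMat n G s).trace = 6 * tPM n G s := by
  unfold tPM
  rw [mul_div_cancel₀ _ (by norm_num : (6:ℝ) ≠ 0)]
  simp only [Matrix.trace, Matrix.diag, Matrix.mul_apply, Finset.sum_mul]
  refine Finset.sum_congr rfl fun i _ => ?_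
  rw [Finset.sum_comm]
  refine Finset.sum_congr rfl fun j _ => Finset.sum_congr rfl fun k _ => ?_
  unfold adjMat
  split_ifs with h1 h2 h3 h2 h3 h3 h3 <;> simp_all

lemma trace_diagA_zero (d : Fin n → ℝ) (B : Matrix (Fin n) (Fin n) ℝ)
    (hB : ∀ i, B i i = 0) : (Matrix.diagonal d * B).trace = 0 := by
  simp [Matrix.trace, Matrix.diag, Matrix.diagonal_mul, hB]

lemma adj_diag_zero (i : Fin n) : adjMat n G s i i = 0 := by
  simp [adjMat]

omit hsym in
include hsgn in
lemma lap_posSemidef (hL : (lapMat n G s).IsHermitian) : (lapMat n G s).PosSemidef := by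
  refine Matrix.PosSemidef.of_dotProduct_mulVec_nonneg hL fun x => ?_
  rw [star_trivial]
  have hAM : ∀ i, (adjMat n G s *ᵥ x) i = ∑ j, adjMat n G s i j * x j := fun i => rfl
  have hLv : ∀ i, (lapMat n G s *ᵥ x) i
      = (G.degree i : ℝ) * x i - ∑ j, adjMat n G s i j * x j := by
    intro i
    rw [lapMat, Matrix.sub_mulVec, Pi.sub_apply, Matrix.mulVec_diagonal, hAM]
  have hrow : ∀ i, ∑ j, (if G.Adj i j then (x i - s i j * x j)^2 else 0) =
      (G.degree i : ℝ) * x i ^ 2 + (∑ j, if G.Adj i j then x j ^ 2 else 0)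
        - 2 * (x i * ∑ j, adjMat n G s i j * x j) := by
    intro i
    rw [← deg_eq_sum' n G i, Finset.sum_mul, Finset.mul_sum, Finset.mul_sum,
      ← Finset.sum_add_distrib, ← Finset.sum_sub_distrib]
    refine Finset.sum_congr rfl fun j _ => ?_
    unfold adjMat
    by_cases h : G.Adj i j
    · simp only [if_pos h]
      have hs : s i j ^ 2 = 1 := by rcases hsgn i j h with h1 | h1 <;> rw [h1] <;> norm_num
      nlinarith [hs]
    · simp [h]
  have hmid : ∑ i, ∑ j, (if G.Adj i j then x j ^ 2 else 0)
      = ∑ j, (G.degree j : ℝ) * x j ^ 2 := by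
    rw [Finset.sum_comm]
    refine Finset.sum_congr rfl fun j _ => ?_
    rw [← deg_eq_sum' n G j, Finset.sum_mul]
    refine Finset.sum_congr rfl fun i _ => ?_
    by_cases h : G.Adj i j
    · rw [if_pos h, if_pos h.symm, one_mul]
    · rw [if_neg h, if_neg (fun hh => h hh.symm), zero_mul]
  have key : 2 * (x ⬝ᵥ (lapMat n G s *ᵥ x)) =
      ∑ i, ∑ j, (if G.Adj i j then (x i - s i j * x j)^2 else 0) := by
    simp only [hrow]
    rw [Finset.sum_sub_distrib, Finset.sum_add_distrib, hmid, dotProduct, Finset.mul_sum,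
      ← Finset.sum_add_distrib, ← Finset.sum_sub_distrib]
    refine Finset.sum_congr rfl fun i _ => ?_
    rw [hLv i]
    ring
  have h2 : 0 ≤ 2 * (x ⬝ᵥ (lapMat n G s *ᵥ x)) := by
    rw [key]
    refine Finset.sum_nonneg fun i _ => Finset.sum_nonneg fun j _ => ?_
    split_ifs
    · positivity
    · exact le_refl 0
  linarith

omit hsym hsgn in
lemma rank_add_balanced : numBalanced n G s + (lapMat n G s).rank ≤ n := by
  classical
  set P : G.ConnectedComponent → Prop := fun c =>
    ∃ θ : Fin n → ℝ, (∀ v, θ v = 1 ∨ θ v = -1) ∧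
      ∀ i j, G.Adj i j → G.connectedComponentMk i = c → s i j = θ i * θ j with hP
  haveI : Fintype {c : G.ConnectedComponent // P c} := Fintype.ofFinite _
  have hθ := fun (c : {c // P c}) => c.2
  choose θ hθpm hθs using hθ
  set v : {c // P c} → (Fin n → ℝ) := fun c w =>
    if G.connectedComponentMk w = c.1 then θ c w else 0 with hv
  have hker : ∀ c, (lapMat n G s).mulVecLin (v c) = 0 := by
    intro c
    funext i
    rw [Matrix.mulVecLin_apply]
    show (lapMat n G s *ᵥ v c) i = 0
    have hexp : (lapMat n G s *ᵥ v c) i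
        = (G.degree i : ℝ) * v c i - ∑ j, adjMat n G s i j * v c j := by
      rw [lapMat, Matrix.sub_mulVec, Pi.sub_apply, Matrix.mulVec_diagonal]; rfl
    rw [hexp]
    by_cases hi : G.connectedComponentMk i = c.1
    · have hstep : ∑ j, adjMat n G s i j * v c j
          = ∑ j, (if G.Adj i j then (1:ℝ) else 0) * θ c i := by
        refine Finset.sum_congr rfl fun j _ => ?_
        by_cases hadj : G.Adj i j
        · have hj : G.connectedComponentMk j = c.1 := by
            rw [← hi]
            exact SimpleGraph.ConnectedComponent.connectedComponentMk_eq_of_adj hadj.symm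
          have hsij : s i j = θ c i * θ c j := hθs c i j hadj hi
          have hθj : θ c j * θ c j = 1 := by
            rcases hθpm c j with h1 | h1 <;> rw [h1] <;> norm_num
          show (if G.Adj i j then s i j else 0) * (if G.connectedComponentMk j = c.1 then θ c j else 0) = _
          rw [if_pos hadj, if_pos hadj, if_pos hj, hsij, one_mul]
          calc θ c i * θ c j * θ c j = θ c i * (θ c j * θ c j) := by ring
            _ = θ c i := by rw [hθj, mul_one]
        · show (if G.Adj i j then s i j else 0) * _ = (if G.Adj i j then (1:ℝ) else 0) * θ c i
          rw [if_neg hadj, if_neg hadj, zero_mul, zero_mul]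
      rw [hstep, ← Finset.sum_mul, deg_eq_sum']
      have : v c i = θ c i := by rw [hv]; simp only [if_pos hi]
      rw [this, sub_self]
    · have hvz : v c i = 0 := by rw [hv]; simp only [if_neg hi]
      have hz : ∑ j, adjMat n G s i j * v c j = 0 := by
        refine Finset.sum_eq_zero fun j _ => ?_
        by_cases hadj : G.Adj i j
        · have hj : ¬ G.connectedComponentMk j = c.1 := by
            rw [SimpleGraph.ConnectedComponent.connectedComponentMk_eq_of_adj hadj.symm]
            exact hi
          show _ * (if G.connectedComponentMk j = c.1 then θ c j else 0) = 0
          rw [if_neg hj, mul_zero]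
        · show (if G.Adj i j then s i j else 0) * _ = 0
          rw [if_neg hadj, zero_mul]
      rw [hz, hvz, mul_zero, sub_zero]
  set K := LinearMap.ker (lapMat n G s).mulVecLin with hK
  set w : {c // P c} → K := fun c => ⟨v c, by rw [LinearMap.mem_ker]; exact hker c⟩ with hw
  have hli : LinearIndependent ℝ w := by
    rw [Fintype.linearIndependent_iff]
    intro g hg c
    obtain ⟨u, hu⟩ := c.1.exists_rep
    have hu' : G.connectedComponentMk u = c.1 := hu
    have hzz := congrArg (fun z : K => (z : Fin n → ℝ) u) hg
    simp only [Submodule.coe_sum, SetLike.val_smul, Finset.sum_apply,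
      Pi.smul_apply, smul_eq_mul, ZeroMemClass.coe_zero, Pi.zero_apply] at hzz
    have hsum : ∑ c' : {c // P c}, g c' * v c' u = 0 := hzz
    have honly : ∀ c' : {c // P c}, c' ∈ Finset.univ → c' ≠ c → g c' * v c' u = 0 := by
      intro c' _ hne
      have hne' : G.connectedComponentMk u ≠ c'.1 := by
        rw [hu']
        intro h
        exact hne (Subtype.ext h.symm)
      have : v c' u = 0 := by rw [hv]; simp only [if_neg hne']
      rw [this, mul_zero]
    rw [Finset.sum_eq_single c honly (by simp)] at hsum
    have hvu : v c u = θ c u := by rw [hv]; simp only [if_pos hu']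
    rw [hvu] at hsum
    rcases hθpm c u with h1 | h1 <;> rw [h1] at hsum <;> linarith
  have hcard : Fintype.card {c // P c} ≤ Module.finrank ℝ K :=
    hli.fintype_card_le_finrank
  have hrn : (lapMat n G s).rank + Module.finrank ℝ K = n := by
    have h0 := LinearMap.finrank_range_add_finrank_ker (lapMat n G s).mulVecLin
    rw [Module.finrank_fintype_fun_eq_card, Fintype.card_fin] at h0
    rw [Matrix.rank]
    exact h0
  have hnb : numBalanced n G s = Fintype.card {c // P c} := by
    rw [numBalanced, Nat.card_eq_fintype_card]
  omega

-- trace identities for the Laplacian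

include hsym hsgn in
lemma trace_L1 : (lapMat n G s).trace = ∑ j, (G.degree j : ℝ) := by
  rw [lapMat, Matrix.trace_sub, Matrix.trace_diagonal]
  have : (adjMat n G s).trace = 0 := by
    simp [Matrix.trace, Matrix.diag, adj_diag_zero]
  rw [this, sub_zero]

include hsym hsgn in
lemma trace_L2 : ((lapMat n G s) ^ 2).trace
    = ∑ j, (G.degree j : ℝ) + ∑ j, (G.degree j : ℝ) ^ 2 := by
  set D := Matrix.diagonal (fun i => (G.degree i : ℝ)) with hD
  set A := adjMat n G s with hA
  have e2 : (lapMat n G s) ^ 2 = D*D - D*A - A*D + A*A := by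
    rw [lapMat, ← hD, ← hA]; noncomm_ring
  rw [e2, Matrix.trace_add, Matrix.trace_sub, Matrix.trace_sub]
  have h1 : (D*D).trace = ∑ j, (G.degree j : ℝ) ^ 2 := by
    rw [hD, Matrix.diagonal_mul_diagonal, Matrix.trace_diagonal]
    exact Finset.sum_congr rfl fun j _ => (sq _).symm
  have h2 : (D*A).trace = 0 := trace_diagA_zero n _ _ (adj_diag_zero n G s)
  have h3 : (A*D).trace = 0 := by rw [Matrix.trace_mul_comm]; exact h2
  have h4 : (A*A).trace = ∑ j, (G.degree j : ℝ) := trace_A2 n G s hsym hsgn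
  rw [h1, h2, h3, h4]
  ring

include hsym hsgn in
lemma trace_L3 : ((lapMat n G s) ^ 3).trace
    = ∑ j, (G.degree j : ℝ) ^ 3 + 3 * ∑ j, (G.degree j : ℝ) ^ 2 - 6 * tPM n G s := by
  set D := Matrix.diagonal (fun i => (G.degree i : ℝ)) with hD
  set A := adjMat n G s with hA
  have e3 : (lapMat n G s) ^ 3
      = D*D*D - D*D*A - D*A*D + D*A*A - A*D*D + A*D*A + A*A*D - A*A*A := by
    rw [lapMat, ← hD, ← hA]; noncomm_ring
  rw [e3, Matrix.trace_sub, Matrix.trace_add, Matrix.trace_add, Matrix.trace_sub,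
    Matrix.trace_add, Matrix.trace_sub, Matrix.trace_sub]
  have hDDD : (D*D*D).trace = ∑ j, (G.degree j : ℝ) ^ 3 := by
    rw [hD, Matrix.diagonal_mul_diagonal, Matrix.diagonal_mul_diagonal, Matrix.trace_diagonal]
    exact Finset.sum_congr rfl fun j _ => by ring
  have hDDA : (D*D*A).trace = 0 := by
    rw [hD, Matrix.diagonal_mul_diagonal]
    exact trace_diagA_zero n _ _ (adj_diag_zero n G s)
  have hDAD : (D*A*D).trace = 0 := by rw [Matrix.trace_mul_cycle]; exact hDDA
  have hADD : (A*D*D).trace = 0 := by rw [Matrix.trace_mul_cycle]; exact hDAD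
  have hDAA : (D*A*A).trace = ∑ j, (G.degree j : ℝ) ^ 2 := by
    rw [mul_assoc]; exact trace_DA2 n G s hsym hsgn
  have hADA : (A*D*A).trace = ∑ j, (G.degree j : ℝ) ^ 2 := by
    rw [Matrix.trace_mul_cycle, Matrix.trace_mul_comm]
    exact trace_DA2 n G s hsym hsgn
  have hAAD : (A*A*D).trace = ∑ j, (G.degree j : ℝ) ^ 2 := by
    rw [Matrix.trace_mul_comm]
    exact trace_DA2 n G s hsym hsgn
  have hAAA : (A*A*A).trace = 6 * tPM n G s := trace_A3 n G s
  rw [hDDD, hDDA, hDAD, hADD, hDAA, hADA, hAAD, hAAA]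
  ring

end

/-- λ_max(L(Σ)) ≥ (|s₁(s₁+s₂) − (s₃+3s₂−6t^±)|/((n−b)(n−b−1)))^{1/3} when b ≤ n−2. -/
theorem stmt12 (n : ℕ) (G : SimpleGraph (Fin n)) [DecidableRel G.Adj]
    (s : Fin n → Fin n → ℝ) (hsym : ∀ i j, s i j = s j i)
    (hsgn : ∀ i j, G.Adj i j → s i j = 1 ∨ s i j = -1)
    (hb : numBalanced n G s + 2 ≤ n)
    (hL : (lapMat n G s).IsHermitian) :
    (|(∑ j, (G.degree j : ℝ)) * (∑ j, (G.degree j : ℝ) + ∑ j, (G.degree j : ℝ) ^ 2) -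
        (∑ j, (G.degree j : ℝ) ^ 3 + 3 * ∑ j, (G.degree j : ℝ) ^ 2 - 6 * tPM n G s)| /
      (((n : ℝ) - numBalanced n G s) * ((n : ℝ) - numBalanced n G s - 1)))
        ^ ((1 : ℝ) / 3) ≤
      ⨆ i, hL.eigenvalues i := by
  classical
  have hn2 : 2 ≤ n := le_trans (by omega) hb
  haveI : Nonempty (Fin n) := ⟨⟨0, by omega⟩⟩
  set lam : Fin n → ℝ := hL.eigenvalues with hlam
  set M : ℝ := ⨆ i, lam i with hMdef
  have hle : ∀ i, lam i ≤ M := fun i => le_ciSup (Set.Finite.bddAbove (Set.finite_range lam)) i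
  have hnn : ∀ i, 0 ≤ lam i := (lap_posSemidef n G s hsgn hL).eigenvalues_nonneg
  have hM0 : 0 ≤ M := le_trans (hnn ⟨0, by omega⟩) (hle _)
  -- eigenvalue power sums
  have e1 : ∑ i, lam i = ∑ j, (G.degree j : ℝ) := by
    have := trace_pow_eq (lapMat n G s) hL 0
    norm_num at this
    rw [hlam, ← this, trace_L1 n G s hsym hsgn]
  have e2 : ∑ i, lam i ^ 2 = ∑ j, (G.degree j : ℝ) + ∑ j, (G.degree j : ℝ) ^ 2 := by
    have := trace_pow_eq (lapMat n G s) hL 1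
    norm_num at this
    rw [hlam, ← this]
    exact trace_L2 n G s hsym hsgn
  have e3 : ∑ i, lam i ^ 3
      = ∑ j, (G.degree j : ℝ) ^ 3 + 3 * ∑ j, (G.degree j : ℝ) ^ 2 - 6 * tPM n G s := by
    have := trace_pow_eq (lapMat n G s) hL 2
    norm_num at this
    rw [hlam, ← this]
    exact trace_L3 n G s hsym hsgn
  -- the quantity T
  set T : ℝ := (∑ i, lam i) * (∑ i, lam i ^ 2) - ∑ i, lam i ^ 3 with hT
  -- nonzero eigenvalues
  set S : Finset (Fin n) := Finset.univ.filter (fun i => lam i ≠ 0) with hSdef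
  set k : ℕ := S.card with hk
  set b : ℕ := numBalanced n G s with hbdef
  set r : ℕ := n - b with hr
  have hrank : (lapMat n G s).rank = k := by
    rw [hL.rank_eq_card_non_zero_eigs]
    rw [Fintype.card_subtype]
  have hkr : k ≤ r := by
    have := rank_add_balanced n G s
    omega
  have hr2 : 2 ≤ r := by omega
  have hsum2S : ∑ j, lam j ^ 2 = ∑ j ∈ S, lam j ^ 2 := by
    rw [hSdef]
    exact (Finset.sum_filter_of_ne (fun j _ h => by
      intro hz; rw [hz] at h; simp at h)).symm
  have hTrow : T = ∑ i, lam i * ((∑ j, lam j ^ 2) - lam i ^ 2) := by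
    rw [hT, Finset.sum_mul, ← Finset.sum_sub_distrib]
    exact Finset.sum_congr rfl fun i _ => by ring
  have hTS : T = ∑ i ∈ S, lam i * ((∑ j, lam j ^ 2) - lam i ^ 2) := by
    rw [hTrow, hSdef]
    exact (Finset.sum_filter_of_ne (fun i _ h => by
      intro hz; rw [hz] at h; simp at h)).symm
  have hterm : ∀ i ∈ S, |lam i * ((∑ j, lam j ^ 2) - lam i ^ 2)|
      ≤ M * (((k - 1 : ℕ) : ℝ) * M ^ 2) := by
    intro i hi
    have hCval : (∑ j, lam j ^ 2) - lam i ^ 2 = ∑ j ∈ S.erase i, lam j ^ 2 := by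
      rw [hsum2S, ← Finset.sum_erase_add S _ hi]
      ring
    have hCnn : 0 ≤ (∑ j, lam j ^ 2) - lam i ^ 2 := by
      rw [hCval]
      exact Finset.sum_nonneg fun j _ => sq_nonneg _
    have hCle : (∑ j, lam j ^ 2) - lam i ^ 2 ≤ ((k - 1 : ℕ) : ℝ) * M ^ 2 := by
      rw [hCval]
      calc ∑ j ∈ S.erase i, lam j ^ 2 ≤ (S.erase i).card • (M ^ 2) := by
            refine Finset.sum_le_card_nsmul _ _ _ fun j _ => ?_
            exact pow_le_pow_left₀ (hnn j) (hle j) 2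
        _ = ((k - 1 : ℕ) : ℝ) * M ^ 2 := by
            rw [Finset.card_erase_of_mem hi, nsmul_eq_mul, hk]
    rw [abs_mul, abs_of_nonneg (hnn i), abs_of_nonneg hCnn]
    exact mul_le_mul (hle i) hCle hCnn hM0
  have hTk : |T| ≤ (k : ℝ) * (M * (((k - 1 : ℕ) : ℝ) * M ^ 2)) := by
    calc |T| ≤ ∑ i ∈ S, |lam i * ((∑ j, lam j ^ 2) - lam i ^ 2)| := by
          rw [hTS]; exact Finset.abs_sum_le_sum_abs _ _
      _ ≤ S.card • (M * (((k - 1 : ℕ) : ℝ) * M ^ 2)) :=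
          Finset.sum_le_card_nsmul _ _ _ hterm
      _ = (k : ℝ) * (M * (((k - 1 : ℕ) : ℝ) * M ^ 2)) := by rw [nsmul_eq_mul, hk]
  have hTr : |T| ≤ (r : ℝ) * ((r - 1 : ℕ) : ℝ) * M ^ 3 := by
    have h1 : (k : ℝ) ≤ (r : ℝ) := Nat.cast_le.mpr hkr
    have h2 : ((k - 1 : ℕ) : ℝ) ≤ ((r - 1 : ℕ) : ℝ) := Nat.cast_le.mpr (by omega)
    calc |T| ≤ (k : ℝ) * (M * (((k - 1 : ℕ) : ℝ) * M ^ 2)) := hTk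
      _ ≤ (r : ℝ) * (M * (((r - 1 : ℕ) : ℝ) * M ^ 2)) := by
          have hM2 : (0:ℝ) ≤ M ^ 2 := sq_nonneg M
          have hi1 : ((k - 1 : ℕ) : ℝ) * M ^ 2 ≤ ((r - 1 : ℕ) : ℝ) * M ^ 2 :=
            mul_le_mul_of_nonneg_right h2 hM2
          have hi2 : M * (((k - 1 : ℕ) : ℝ) * M ^ 2) ≤ M * (((r - 1 : ℕ) : ℝ) * M ^ 2) :=
            mul_le_mul_of_nonneg_left hi1 hM0
          have hi3 : (0:ℝ) ≤ M * (((k - 1 : ℕ) : ℝ) * M ^ 2) := by positivity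
          exact mul_le_mul h1 hi2 hi3 (Nat.cast_nonneg r)
      _ = (r : ℝ) * ((r - 1 : ℕ) : ℝ) * M ^ 3 := by ring
  -- rewrite denominator
  have hbn : b ≤ n := by omega
  have hden1 : ((n : ℝ) - b) = (r : ℝ) := by
    rw [hr]; push_cast [Nat.cast_sub hbn]; ring
  have hden2 : ((n : ℝ) - b - 1) = ((r - 1 : ℕ) : ℝ) := by
    rw [Nat.cast_sub (by omega : 1 ≤ r)]
    rw [← hden1]; push_cast; ring
  have hdenpos : 0 < (r : ℝ) * ((r - 1 : ℕ) : ℝ) := by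
    apply mul_pos
    · exact_mod_cast (by omega : 0 < r)
    · exact_mod_cast (by omega : 0 < r - 1)
  -- numerator equals T
  have hnum : (∑ j, (G.degree j : ℝ)) * (∑ j, (G.degree j : ℝ) + ∑ j, (G.degree j : ℝ) ^ 2) -
      (∑ j, (G.degree j : ℝ) ^ 3 + 3 * ∑ j, (G.degree j : ℝ) ^ 2 - 6 * tPM n G s) = T := by
    rw [hT, e1, e2, e3]
  rw [hnum, hden2, hden1]
  have hX : |T| / ((r : ℝ) * ((r - 1 : ℕ) : ℝ)) ≤ M ^ 3 := by
    rw [div_le_iff₀ hdenpos]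
    calc |T| ≤ (r : ℝ) * ((r - 1 : ℕ) : ℝ) * M ^ 3 := hTr
      _ = M ^ 3 * ((r : ℝ) * ((r - 1 : ℕ) : ℝ)) := by ring
  have hXnn : 0 ≤ |T| / ((r : ℝ) * ((r - 1 : ℕ) : ℝ)) :=
    div_nonneg (abs_nonneg _) (le_of_lt hdenpos)
  calc (|T| / ((r : ℝ) * ((r - 1 : ℕ) : ℝ))) ^ ((1:ℝ)/3)
      ≤ (M ^ 3) ^ ((1:ℝ)/3) := Real.rpow_le_rpow hXnn hX (by norm_num)
    _ = M := by
        rw [← Real.rpow_natCast M 3, ← Real.rpow_mul hM0]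
        norm_num
end
end

section
/- For a graph Γ on n vertices, the signless Laplacian spectral radius satisfies λ_max(Q(Γ)) ≥ √((4/n)·∑_{j=1}^n d_j²). -/
open Matrix BigOperators

noncomputable section

/-- 0/1 adjacency matrix of a simple graph. -/
def adjMatU (n : ℕ) (G : SimpleGraph (Fin n)) [DecidableRel G.Adj] :
    Matrix (Fin n) (Fin n) ℝ :=
  fun i j => if G.Adj i j then 1 else 0

/-- Laplacian L(Γ) = D - A. -/
def lapMatU (n : ℕ) (G : SimpleGraph (Fin n)) [DecidableRel G.Adj] :
    Matrix (Fin n) (Fin n) ℝ :=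
  Matrix.diagonal (fun i => (G.degree i : ℝ)) - adjMatU n G

/-- Signless Laplacian Q(Γ) = D + A. -/
def signlessLap (n : ℕ) (G : SimpleGraph (Fin n)) [DecidableRel G.Adj] :
    Matrix (Fin n) (Fin n) ℝ :=
  Matrix.diagonal (fun i => (G.degree i : ℝ)) + adjMatU n G

/-- Sum of `f i j` over the edges of the graph (each unordered edge counted once). -/
def edgeSumU (n : ℕ) (G : SimpleGraph (Fin n)) [DecidableRel G.Adj]
    (f : Fin n → Fin n → ℝ) : ℝ :=
  (∑ i, ∑ j, if G.Adj i j then f i j else 0) / 2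

lemma adj_row_sum (n : ℕ) (G : SimpleGraph (Fin n)) [DecidableRel G.Adj] (i : Fin n) :
    ∑ j, adjMatU n G i j = (G.degree i : ℝ) := by
  simp only [adjMatU, Finset.sum_boole]
  rw [SimpleGraph.degree, SimpleGraph.neighborFinset_eq_filter]

lemma signlessLap_posSemidef (n : ℕ) (G : SimpleGraph (Fin n)) [DecidableRel G.Adj]
    (hQ : (signlessLap n G).IsHermitian) : (signlessLap n G).PosSemidef := by
  refine posSemidef_iff_dotProduct_mulVec.mpr ⟨hQ, fun x => ?_⟩
  have ha : star x ⬝ᵥ (signlessLap n G) *ᵥ x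
      = (∑ i, (G.degree i : ℝ) * (x i * x i))
        + ∑ i, ∑ j, (if G.Adj i j then x i * x j else 0) := by
    simp only [star_trivial, dotProduct, mulVec, signlessLap, Matrix.add_apply,
      Matrix.diagonal_apply, adjMatU, add_mul, ite_mul, one_mul, zero_mul,
      Finset.sum_add_distrib, Finset.sum_ite_eq, Finset.mem_univ, if_true, mul_add,
      Finset.mul_sum, mul_ite, mul_zero]
    congr 1
    exact Finset.sum_congr rfl fun i _ => by ring
  have hD : (∑ i, (G.degree i : ℝ) * (x i * x i))
      = ∑ i, ∑ j, (if G.Adj i j then x i * x i else 0) := by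
    refine Finset.sum_congr rfl fun i _ => ?_
    rw [← adj_row_sum n G i, Finset.sum_mul]
    refine Finset.sum_congr rfl fun j _ => ?_
    simp [adjMatU]
  have hswap : ∑ i, ∑ j, (if G.Adj i j then x i * x i else 0)
      = ∑ i, ∑ j, (if G.Adj i j then x j * x j else 0) := by
    rw [Finset.sum_comm]
    exact Finset.sum_congr rfl fun i _ => Finset.sum_congr rfl fun j _ => by
      simp [G.adj_comm i j]
  have key : 2 * (star x ⬝ᵥ (signlessLap n G) *ᵥ x)
      = ∑ i, ∑ j, (if G.Adj i j then (x i + x j) ^ 2 else 0) := by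
    rw [ha, hD]
    have hterm : ∀ i j : Fin n, (if G.Adj i j then (x i + x j) ^ 2 else 0)
        = ((if G.Adj i j then x i * x i else 0) + (if G.Adj i j then x j * x j else 0))
          + ((if G.Adj i j then x i * x j else 0) + (if G.Adj i j then x i * x j else 0)) := by
      intro i j; split
      · ring
      · simp
    simp only [hterm, Finset.sum_add_distrib]
    rw [← hswap]
    ring
  have hnn : 0 ≤ ∑ i, ∑ j, (if G.Adj i j then (x i + x j) ^ 2 else 0) :=
    Finset.sum_nonneg fun i _ => Finset.sum_nonneg fun j _ => by positivity
  nlinarith [key]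

/-- λ_max(Q(Γ)) ≥ √((4/n) ∑_j d_j²). -/
theorem stmt16 (n : ℕ) (hn : 0 < n) (G : SimpleGraph (Fin n)) [DecidableRel G.Adj]
    (hQ : (signlessLap n G).IsHermitian) :
    Real.sqrt ((4 / (n : ℝ)) * ∑ j, (G.degree j : ℝ) ^ 2) ≤ ⨆ i, hQ.eigenvalues i := by
  haveI : Nonempty (Fin n) := Fin.pos_iff_nonempty.mp hn
  set Q := signlessLap n G with hQdef
  set μ := ⨆ i, hQ.eigenvalues i with hμ
  have hpsd := signlessLap_posSemidef n G hQ
  have hev_nonneg : ∀ i, 0 ≤ hQ.eigenvalues i := fun i => hpsd.eigenvalues_nonneg i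
  have hev_le : ∀ i, hQ.eigenvalues i ≤ μ := fun i =>
    le_ciSup (Set.Finite.bddAbove (Set.finite_range _)) i
  have hμ0 : 0 ≤ μ := le_trans (hev_nonneg (Classical.arbitrary _)) (hev_le _)
  -- the all-ones vector
  set x : EuclideanSpace ℝ (Fin n) := WithLp.toLp 2 (fun _ => (1 : ℝ)) with hx
  set y : EuclideanSpace ℝ (Fin n) := WithLp.toLp 2 (Q *ᵥ x) with hy
  have hyval : ∀ j, y j = 2 * (G.degree j : ℝ) := by
    intro j
    show (Q *ᵥ x) j = _
    simp only [mulVec, dotProduct, hx, mul_one]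
    have : ∑ k, Q j k = (G.degree j : ℝ) + (G.degree j : ℝ) := by
      simp only [hQdef, signlessLap, Matrix.add_apply, Finset.sum_add_distrib,
        adj_row_sum n G j]
      congr 1
      simp [Matrix.diagonal]
    rw [this]; ring
  set b := hQ.eigenvectorBasis with hb
  have hQsymm : ∀ k l, Q k l = Q l k := by
    intro k l
    have := congrFun (congrFun hQ.eq l) k
    simpa [Matrix.conjTranspose_apply] using this
  have hmul : ∀ i k, (Q *ᵥ (b i : Fin n → ℝ)) k = hQ.eigenvalues i * (b i) k := by
    intro i k
    have := congrFun (hQ.mulVec_eigenvectorBasis i) k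
    simpa using this
  have hrepr_y : ∀ i, b.repr y i = hQ.eigenvalues i * b.repr x i := by
    intro i
    rw [b.repr_apply_apply, b.repr_apply_apply]
    have hinner : ∀ u v : EuclideanSpace ℝ (Fin n),
        (inner ℝ u v : ℝ) = ∑ k, u k * v k := by
      intro u v
      simp [PiLp.inner_apply, RCLike.inner_apply, mul_comm]
    rw [hinner, hinner, Finset.mul_sum]
    have hyk : ∀ k, y k = ∑ l, Q k l * x l := fun k => rfl
    have hsym : ∀ k, ∑ l, (b i) l * Q k l = hQ.eigenvalues i * (b i) k := by
      intro k
      have : ∑ l, Q k l * (b i) l = hQ.eigenvalues i * (b i) k := hmul i k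
      rw [← this]
      exact Finset.sum_congr rfl fun l _ => mul_comm _ _
    calc ∑ k, (b i) k * y k = ∑ k, ∑ l, (b i) k * (Q k l * x l) := by
          refine Finset.sum_congr rfl fun k _ => ?_
          rw [hyk k, Finset.mul_sum]
      _ = ∑ l, ∑ k, ((b i) k * Q k l) * x l := by
          rw [Finset.sum_comm]
          exact Finset.sum_congr rfl fun l _ => Finset.sum_congr rfl fun k _ => by ring
      _ = ∑ l, (∑ k, (b i) k * Q l k) * x l := by
          refine Finset.sum_congr rfl fun l _ => ?_
          rw [Finset.sum_mul]
          exact Finset.sum_congr rfl fun k _ => by rw [hQsymm k l]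
      _ = ∑ l, (hQ.eigenvalues i * (b i) l) * x l := by
          refine Finset.sum_congr rfl fun l _ => ?_
          rw [hsym l]
      _ = ∑ k, hQ.eigenvalues i * ((b i) k * x k) := by
          exact Finset.sum_congr rfl fun k _ => by ring
  have hnormsq : ∀ v : EuclideanSpace ℝ (Fin n),
      ∑ j, v j ^ 2 = ∑ i, (b.repr v i) ^ 2 := by
    intro v
    have h := b.repr.inner_map_map v v
    simp only [PiLp.inner_apply, RCLike.inner_apply, conj_trivial] at h
    calc ∑ j, v j ^ 2 = ∑ j, v j * v j := by simp [sq]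
      _ = ∑ i, b.repr v i * b.repr v i := h.symm
      _ = ∑ i, (b.repr v i) ^ 2 := by simp [sq]
  have hxsum : ∑ j, x j ^ 2 = (n : ℝ) := by simp [hx]
  have hysum : ∑ j, y j ^ 2 = 4 * ∑ j, (G.degree j : ℝ) ^ 2 := by
    rw [Finset.mul_sum]
    refine Finset.sum_congr rfl fun j _ => ?_
    rw [hyval j]; ring
  have hkey : 4 * ∑ j, (G.degree j : ℝ) ^ 2 ≤ μ ^ 2 * n := by
    calc 4 * ∑ j, (G.degree j : ℝ) ^ 2 = ∑ j, y j ^ 2 := hysum.symm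
      _ = ∑ i, (b.repr y i) ^ 2 := hnormsq y
      _ = ∑ i, (hQ.eigenvalues i) ^ 2 * (b.repr x i) ^ 2 := by
          refine Finset.sum_congr rfl fun i _ => ?_
          rw [hrepr_y i]; ring
      _ ≤ ∑ i, μ ^ 2 * (b.repr x i) ^ 2 := by
          refine Finset.sum_le_sum fun i _ => ?_
          have h1 : hQ.eigenvalues i ^ 2 ≤ μ ^ 2 :=
            pow_le_pow_left₀ (hev_nonneg i) (hev_le i) 2
          nlinarith [sq_nonneg (b.repr x i)]
      _ = μ ^ 2 * ∑ i, (b.repr x i) ^ 2 := by rw [Finset.mul_sum]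
      _ = μ ^ 2 * n := by rw [← hnormsq x, hxsum]
  have hnpos : (0 : ℝ) < n := by exact_mod_cast hn
  have hfinal : (4 / (n : ℝ)) * ∑ j, (G.degree j : ℝ) ^ 2 ≤ μ ^ 2 := by
    rw [div_mul_eq_mul_div, div_le_iff₀ hnpos]
    linarith [hkey]
  calc Real.sqrt ((4 / (n : ℝ)) * ∑ j, (G.degree j : ℝ) ^ 2)
      ≤ Real.sqrt (μ ^ 2) := Real.sqrt_le_sqrt hfinal
    _ = μ := by rw [Real.sqrt_sq hμ0]
end
end
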